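/- arXiv:2311.11115 — 3 statements merged into one kernel-verified Lean document; each statement's English description precedes it below -/
import Mathlib

section
/- Let G be an abelian group, R a G-graded ring, n ≥ 1, and σ ∈ Gⁿ. Then R is graded NR-clean if and only if the upper triangular matrix ring T_n(R) with the grading induced by σ is graded NR-clean. -/
/-- An element is homogeneous w.r.t. a grading family `𝒜` if it lies in some component. -/
def Homogeneous {G : Type*} [Group G] {R : Type*} [Ring R]
    (𝒜 : G → AddSubgroup R) (x : R) : Prop := ∃ g, x ∈ 𝒜 g

/-- A graded-regular element: homogeneous `r` with `r = r * a * r` for some homogeneous `a`. -/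
def GradedRegular {G : Type*} [Group G] {R : Type*} [Ring R]
    (𝒜 : G → AddSubgroup R) (r : R) : Prop :=
  Homogeneous 𝒜 r ∧ ∃ a : R, Homogeneous 𝒜 a ∧ r = r * a * r

/-- Graded NR-clean: every homogeneous element is a sum of a graded-regular element
and a homogeneous nilpotent element. -/
def GradedNRClean {G : Type*} [Group G] {R : Type*} [Ring R]
    (𝒜 : G → AddSubgroup R) : Prop :=
  ∀ x : R, Homogeneous 𝒜 x →
    ∃ r n : R, GradedRegular 𝒜 r ∧ Homogeneous 𝒜 n ∧ IsNilpotent n ∧ x = r + n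

/-- `𝒜` is a `G`-grading of the ring `R`. -/
structure IsGrading {G : Type*} [Group G] [DecidableEq G] {R : Type*} [Ring R]
    (𝒜 : G → AddSubgroup R) : Prop where
  one_mem : (1 : R) ∈ 𝒜 1
  mul_mem : ∀ {g h : G} {a b : R}, a ∈ 𝒜 g → b ∈ 𝒜 h → a * b ∈ 𝒜 (g * h)
  isInternal : DirectSum.IsInternal 𝒜

/-- The subring of upper triangular `n × n` matrices over `R`. -/
def upperTriangularSubring (R : Type*) [Ring R] (n : ℕ) :
    Subring (Matrix (Fin n) (Fin n) R) where
  carrier := {M | ∀ i j : Fin n, j < i → M i j = 0}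
  zero_mem' := fun i j _ => rfl
  one_mem' := fun i j hij => Matrix.one_apply_ne (by exact fun h => absurd h (by rintro rfl; exact lt_irrefl _ hij))
  add_mem' := fun {a b} ha hb i j hij => by
    show a i j + b i j = 0
    rw [ha i j hij, hb i j hij, add_zero]
  neg_mem' := fun {a} ha i j hij => by
    show -a i j = 0
    rw [ha i j hij, neg_zero]
  mul_mem' := fun {a b} ha hb i j hij => by
    rw [Matrix.mul_apply]
    apply Finset.sum_eq_zero
    intro k _
    rcases lt_or_ge j k with hk | hk
    · rw [hb k j hk, mul_zero]
    · rw [ha i k (lt_of_le_of_lt hk hij), zero_mul]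

/-- The `g`-th component of the grading on `T_n(R)` induced by `σ ∈ Gⁿ`:
matrices whose `(i,j)` entry has degree `σ i * g * (σ j)⁻¹`. -/
def utComponent {G : Type*} [Group G] {R : Type*} [Ring R]
    (𝒜 : G → AddSubgroup R) {n : ℕ} (σ : Fin n → G) (g : G) :
    AddSubgroup (upperTriangularSubring R n) where
  carrier := {M | ∀ i j : Fin n, (M : Matrix (Fin n) (Fin n) R) i j ∈ 𝒜 (σ i * g * (σ j)⁻¹)}
  zero_mem' := fun i j => by
    show ((0 : Matrix (Fin n) (Fin n) R)) i j ∈ _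
    simpa using zero_mem (𝒜 (σ i * g * (σ j)⁻¹))
  add_mem' := fun {a b} ha hb i j => by
    show ((a : Matrix (Fin n) (Fin n) R) + b) i j ∈ _
    exact add_mem (ha i j) (hb i j)
  neg_mem' := fun {a} ha i j => by
    show (-(a : Matrix (Fin n) (Fin n) R)) i j ∈ _
    exact neg_mem (ha i j)

/-!
Over a graded NR-clean ring a homogeneous `x` of degree `d` splits as `x = r + ν` with
`r = r a r` and `ν` nilpotent, where `r`, `ν` have degree `d` and `a` has degree `d⁻¹`: take the
degree-`d` components of an arbitrary splitting, and note that `r a r = r ≠ 0` forces the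
degree of `a`. For a homogeneous `M ∈ T_n(R)(σ)` of degree `g` the diagonal entries have degree
`σᵢ g σᵢ⁻¹ = g` (here `G` is abelian); splitting them gives a regular diagonal matrix `D`, and
`M - D` is upper triangular with nilpotent diagonal, hence nilpotent. Conversely, a diagonal
entry `T_n(R)(σ) → R` is a degree-preserving ring homomorphism which is onto on each component
(constant diagonal matrices), and such maps carry graded NR-cleanness down.
-/

theorem DirectSum.coe_decompose_eq_zero_or_eq_self {ι M σ : Type*} [DecidableEq ι]
    [AddCommMonoid M] [SetLike σ M] [AddSubmonoidClass σ M] (ℳ : ι → σ)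
    [DirectSum.Decomposition ℳ] {x : M} {i : ι} (hx : x ∈ ℳ i) (j : ι) :
    (DirectSum.decompose ℳ x j : M) = 0 ∨ (DirectSum.decompose ℳ x j : M) = x := by
  rcases eq_or_ne i j with rfl | hij
  · exact .inr (DirectSum.decompose_of_mem_same ℳ hx)
  · exact .inl (DirectSum.decompose_of_mem_ne ℳ hx hij)

theorem Pi.isNilpotent_of_forall {ι S : Type*} [Finite ι] [MonoidWithZero S] {v : ι → S}
    (hv : ∀ i, IsNilpotent (v i)) : IsNilpotent v := by
  cases nonempty_fintype ι
  choose k hk using hv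
  exact ⟨∑ i, k i, funext fun i =>
    pow_eq_zero_of_le (Finset.single_le_sum (fun _ _ => Nat.zero_le _) (Finset.mem_univ i)) (hk i)⟩

section Graded

variable {G : Type*} [Group G] {R : Type*} [Ring R] {𝒜 : G → AddSubgroup R}

theorem gradedRegular_zero : GradedRegular 𝒜 0 :=
  ⟨⟨1, zero_mem _⟩, 0, ⟨1, zero_mem _⟩, (mul_zero _).symm⟩

theorem GradedNRClean.of_ringHom {S : Type*} [Ring S] {𝒮 : G → AddSubgroup S}
    (hS : GradedNRClean 𝒮) (f : S →+* R) (hf : ∀ {g : G} {x : S}, x ∈ 𝒮 g → f x ∈ 𝒜 g)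
    (hlift : ∀ {g : G} {y : R}, y ∈ 𝒜 g → ∃ x ∈ 𝒮 g, f x = y) : GradedNRClean 𝒜 := by
  rintro y ⟨g, hy⟩
  obtain ⟨x, hx, rfl⟩ := hlift hy
  obtain ⟨r, ν, ⟨⟨gr, hr⟩, a, ⟨ga, ha⟩, hrar⟩, ⟨gν, hν⟩, hνnil, rfl⟩ := hS x ⟨g, hx⟩
  exact ⟨f r, f ν, ⟨⟨gr, hf hr⟩, f a, ⟨ga, hf ha⟩, by rw [← map_mul, ← map_mul, ← hrar]⟩,
    ⟨gν, hf hν⟩, hνnil.map f, map_add f r ν⟩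

variable [DecidableEq G]

theorem GradedNRClean.exists_add_mem_of_mem (hI : DirectSum.IsInternal 𝒜) (hC : GradedNRClean 𝒜)
    {d : G} {x : R} (hx : x ∈ 𝒜 d) :
    ∃ r ν : R, r ∈ 𝒜 d ∧ GradedRegular 𝒜 r ∧ ν ∈ 𝒜 d ∧ IsNilpotent ν ∧ x = r + ν := by
  let := hI.chooseDecomposition
  obtain ⟨r, ν, hr, ⟨gν, hν⟩, hνnil, rfl⟩ := hC x ⟨d, hx⟩
  obtain ⟨gr, hr_mem⟩ := hr.1
  refine ⟨DirectSum.decompose 𝒜 r d, DirectSum.decompose 𝒜 ν d, SetLike.coe_mem _, ?_,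
    SetLike.coe_mem _, ?_, ?_⟩
  · rcases DirectSum.coe_decompose_eq_zero_or_eq_self 𝒜 hr_mem d with h | h <;>
      rw [h]
    exacts [gradedRegular_zero, hr]
  · rcases DirectSum.coe_decompose_eq_zero_or_eq_self 𝒜 hν d with h | h <;> rw [h]
    exacts [IsNilpotent.zero, hνnil]
  · rw [← DirectSum.decompose_of_mem_same 𝒜 hx, DirectSum.decompose_add, DirectSum.add_apply,
      AddSubgroup.coe_add]

theorem GradedRegular.exists_mem_inv (hG : IsGrading 𝒜) {d : G} {r : R} (hrd : r ∈ 𝒜 d)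
    (hr : GradedRegular 𝒜 r) : ∃ a ∈ 𝒜 d⁻¹, r = r * a * r := by
  obtain ⟨-, a, ⟨e, ha⟩, hrar⟩ := hr
  rcases eq_or_ne r 0 with rfl | hr0
  · exact ⟨0, zero_mem _, (mul_zero _).symm⟩
  let := hG.isInternal.chooseDecomposition
  have hded : d * e * d = d := DirectSum.degree_eq_of_mem_mem 𝒜
    (hrar ▸ hG.mul_mem (hG.mul_mem hrd ha) hrd) hrd hr0
  have he : e = d⁻¹ := eq_inv_of_mul_eq_one_right (mul_eq_right.mp hded)
  exact ⟨a, he ▸ ha, hrar⟩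

theorem GradedNRClean.exists_regular_add_nilpotent (hG : IsGrading 𝒜) (hC : GradedNRClean 𝒜)
    {d : G} {x : R} (hx : x ∈ 𝒜 d) :
    ∃ r a ν : R, r ∈ 𝒜 d ∧ a ∈ 𝒜 d⁻¹ ∧ r = r * a * r ∧ ν ∈ 𝒜 d ∧ IsNilpotent ν ∧
      x = r + ν := by
  obtain ⟨r, ν, hrd, hr, hν, hνnil, hx⟩ := hC.exists_add_mem_of_mem hG.isInternal hx
  obtain ⟨a, ha, hrar⟩ := hr.exists_mem_inv hG hrd
  exact ⟨r, a, ν, hrd, ha, hrar, hν, hνnil, hx⟩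

end Graded

theorem Matrix.pow_apply_eq_zero_of_lt_add {S : Type*} [Semiring S] {m : ℕ}
    {N : Matrix (Fin m) (Fin m) S} (hN : ∀ i j, j ≤ i → N i j = 0) (k : ℕ) (i j : Fin m)
    (hij : (j : ℕ) < i + k) : (N ^ k) i j = 0 := by
  induction k generalizing j with
  | zero => exact Matrix.one_apply_ne (Fin.ne_of_gt (by simpa using hij))
  | succ k ih =>
    rw [pow_succ, Matrix.mul_apply]
    refine Finset.sum_eq_zero fun l _ => ?_
    rcases lt_or_ge (l : ℕ) (i + k) with hl | hl
    · rw [ih l hl, zero_mul]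
    · rw [hN l j (Fin.le_def.mpr (by omega)), mul_zero]

theorem Matrix.pow_eq_zero_of_strictUpper {S : Type*} [Semiring S] {m : ℕ}
    {N : Matrix (Fin m) (Fin m) S} (hN : ∀ i j, j ≤ i → N i j = 0) : N ^ m = 0 := by
  ext i j
  exact pow_apply_eq_zero_of_lt_add hN m i j (by omega)

namespace upperTriangularSubring

variable {R : Type*} [Ring R] {n : ℕ}

theorem mul_apply_self {M N : Matrix (Fin n) (Fin n) R} (hM : M ∈ upperTriangularSubring R n)
    (hN : N ∈ upperTriangularSubring R n) (i : Fin n) : (M * N) i i = M i i * N i i := by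
  rw [Matrix.mul_apply]
  refine Finset.sum_eq_single i (fun k _ hki => ?_) (by simp)
  rcases lt_or_gt_of_ne hki with hk | hk
  · rw [hM i k hk, zero_mul]
  · rw [hN k i hk, mul_zero]

def diag : upperTriangularSubring R n →+* (Fin n → R) where
  toFun M := Matrix.diag M
  map_one' := funext Matrix.one_apply_eq
  map_mul' M N := funext (mul_apply_self M.2 N.2)
  map_zero' := rfl
  map_add' _ _ := rfl

def diagonal : (Fin n → R) →+* upperTriangularSubring R n :=
  (Matrix.diagonalRingHom (Fin n) R).codRestrict _
    fun v _ _ hij => Matrix.diagonal_apply_ne' v hij.ne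

theorem coe_diagonal (v : Fin n → R) :
    (diagonal v : Matrix (Fin n) (Fin n) R) = Matrix.diagonal v :=
  rfl

theorem diag_diagonal (v : Fin n → R) : diag (diagonal v) = v :=
  Matrix.diag_diagonal v

theorem isNilpotent_of_isNilpotent_diag {M : upperTriangularSubring R n}
    (hM : IsNilpotent (diag M)) : IsNilpotent M := by
  obtain ⟨k, hk⟩ := hM
  have hstrict : ∀ i j, j ≤ i → ((M ^ k : upperTriangularSubring R n) :
      Matrix (Fin n) (Fin n) R) i j = 0 := by
    intro i j hji
    rcases hji.lt_or_eq with hji | rfl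
    · exact (M ^ k).2 i j hji
    · exact congrFun ((map_pow diag M k).trans hk) j
  refine ⟨k * n, Subtype.ext ?_⟩
  rw [pow_mul]
  exact Matrix.pow_eq_zero_of_strictUpper hstrict

variable {G : Type*} [CommGroup G] {𝒜 : G → AddSubgroup R} {σ : Fin n → G} {g : G}

theorem apply_self_mem_of_mem_utComponent {M : upperTriangularSubring R n}
    (hM : M ∈ utComponent 𝒜 σ g) (i : Fin n) : (M : Matrix (Fin n) (Fin n) R) i i ∈ 𝒜 g := by
  simpa only [mul_inv_cancel_comm] using hM i i

theorem diagonal_mem_utComponent {v : Fin n → R} (hv : ∀ i, v i ∈ 𝒜 g) :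
    diagonal v ∈ utComponent 𝒜 σ g := by
  intro i j
  rcases eq_or_ne i j with rfl | hij
  · simpa only [coe_diagonal, Matrix.diagonal_apply_eq, mul_inv_cancel_comm] using hv i
  · rw [coe_diagonal, Matrix.diagonal_apply_ne v hij]
    exact zero_mem _

end upperTriangularSubring

open upperTriangularSubring

theorem GradedNRClean.upperTriangular {G : Type*} [CommGroup G] [DecidableEq G] {R : Type*}
    [Ring R] {𝒜 : G → AddSubgroup R} (hG : IsGrading 𝒜) (hC : GradedNRClean 𝒜) {n : ℕ}
    (σ : Fin n → G) : GradedNRClean (utComponent 𝒜 σ) := by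
  rintro M ⟨g, hM⟩
  choose r a ν hr ha hrar hν hνnil hM_eq using
    fun i => hC.exists_regular_add_nilpotent hG (apply_self_mem_of_mem_utComponent hM i)
  have hdiag : diag (M - diagonal r) = ν := by
    rw [map_sub, diag_diagonal]
    exact funext fun i => sub_eq_of_eq_add' (hM_eq i)
  refine ⟨diagonal r, M - diagonal r, ⟨⟨g, diagonal_mem_utComponent hr⟩, diagonal a,
    ⟨g⁻¹, diagonal_mem_utComponent ha⟩, ?_⟩, ⟨g, sub_mem hM (diagonal_mem_utComponent hr)⟩,
    isNilpotent_of_isNilpotent_diag (hdiag ▸ Pi.isNilpotent_of_forall hνnil),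
    (add_sub_cancel _ M).symm⟩
  rw [← map_mul, ← map_mul]
  exact congrArg diagonal (funext hrar)

theorem GradedNRClean.of_upperTriangular {G : Type*} [CommGroup G] {R : Type*} [Ring R]
    {𝒜 : G → AddSubgroup R} {n : ℕ} {σ : Fin n → G} (hT : GradedNRClean (utComponent 𝒜 σ))
    (i : Fin n) : GradedNRClean 𝒜 :=
  hT.of_ringHom ((Pi.evalRingHom _ i).comp diag)
    (fun hM => apply_self_mem_of_mem_utComponent hM i)
    (fun {_ y} hy => ⟨diagonal fun _ => y, diagonal_mem_utComponent fun _ => hy,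
      by rw [RingHom.comp_apply, diag_diagonal]; rfl⟩)

/-- For `G` abelian, `n ≥ 1` and `σ ∈ Gⁿ`, the ring `R` is graded NR-clean
iff the upper triangular matrix ring `T_n(R)(σ)` is graded NR-clean. -/
theorem stmt11 {G : Type*} [CommGroup G] [DecidableEq G] {R : Type*} [Ring R]
    (𝒜 : G → AddSubgroup R) (hG : IsGrading 𝒜)
    {n : ℕ} (hn : 1 ≤ n) (σ : Fin n → G) :
    GradedNRClean 𝒜 ↔ GradedNRClean (utComponent 𝒜 σ) :=
  ⟨fun hC => hC.upperTriangular hG σ, fun hT => hT.of_upperTriangular ⟨0, hn⟩⟩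
end

section
/- Let R be a G-graded ring. If the group ring R[G] (with its G-grading) is graded NR-clean, then R is an NR-clean ring. -/
/-- The `g`-th component of the `G`-grading on the group ring `R[G]` attached to a family
`ℬ` of additive subgroups of `R`: elements `∑ r_h h` with `r_h ∈ ℬ (g * h⁻¹)` for all `h`. -/
def groupRingComponent {G : Type*} [Group G] {R : Type*} [Ring R]
    (ℬ : G → AddSubgroup R) (g : G) : AddSubgroup (MonoidAlgebra R G) where
  carrier := {u | ∀ h : G, u.coeff h ∈ ℬ (g * h⁻¹)}
  zero_mem' := fun h => by simpa using zero_mem (ℬ (g * h⁻¹))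
  add_mem' := fun {a b} ha hb h => by
    show (a + b).coeff h ∈ ℬ (g * h⁻¹)
    rw [MonoidAlgebra.coeff_add, Finsupp.add_apply]
    exact add_mem (ha h) (hb h)
  neg_mem' := fun {a} ha h => by
    show (-a).coeff h ∈ ℬ (g * h⁻¹)
    rw [MonoidAlgebra.coeff_neg, Finsupp.neg_apply]
    exact neg_mem (ha h)

/-- A ring is NR-clean if every element is a sum of a von Neumann regular element and
a nilpotent element. -/
def NRClean (S : Type*) [Ring S] : Prop :=
  ∀ x : S, ∃ r n : S, (∃ a : S, r = r * a * r) ∧ IsNilpotent n ∧ x = r + n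

/-!
The augmentation map `R[G] → R`, `∑ r_h h ↦ ∑ r_h`, is a ring homomorphism, and ring
homomorphisms carry a regular-plus-nilpotent decomposition to one of the image. It therefore
suffices that every `x : R` is the augmentation of a homogeneous element of `R[G]`: writing
`x = ∑ x_g` with `x_g ∈ 𝒜 g`, the element `∑ x_g g⁻¹` has its `h`-coefficient in `𝒜 (h⁻¹)`,
so it lies in the identity component, and its augmentation is `x`.
-/

def IsNRCleanElement {S : Type*} [Ring S] (x : S) : Prop :=
  ∃ r n : S, (∃ a : S, r = r * a * r) ∧ IsNilpotent n ∧ x = r + n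

theorem IsNRCleanElement.map {S T : Type*} [Ring S] [Ring T] (f : S →+* T) {x : S}
    (hx : IsNRCleanElement x) : IsNRCleanElement (f x) := by
  obtain ⟨r, n, ⟨a, hra⟩, hn, rfl⟩ := hx
  refine ⟨f r, f n, ⟨f a, ?_⟩, hn.map f, map_add f r n⟩
  rw [← map_mul, ← map_mul, ← hra]

theorem GradedNRClean.isNRCleanElement {G : Type*} [Group G] {R : Type*} [Ring R]
    {𝒜 : G → AddSubgroup R} (h : GradedNRClean 𝒜) {x : R} (hx : Homogeneous 𝒜 x) :
    IsNRCleanElement x := by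
  obtain ⟨r, n, ⟨-, a, -, hra⟩, -, hn, hx⟩ := h x hx
  exact ⟨r, n, ⟨a, hra⟩, hn, hx⟩

theorem DirectSum.IsInternal.addSubgroup_iSup_eq_top {ι M : Type*} [DecidableEq ι]
    [AddCommGroup M] {A : ι → AddSubgroup M} (h : IsInternal A) : iSup A = ⊤ := by
  refine (AddSubgroup.eq_top_iff' _).2 fun x => ?_
  obtain ⟨v, rfl⟩ := h.surjective x
  induction v using DirectSum.induction_on with
  | zero => simp
  | of i y => simpa using AddSubgroup.mem_iSup_of_mem i y.2
  | add v w hv hw => simpa using add_mem hv hw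

namespace MonoidAlgebra

variable {G R : Type*} [Ring R]

noncomputable def augmentation [Monoid G] : MonoidAlgebra R G →+* R :=
  liftNCRingHom (RingHom.id R) 1 fun _ _ => Commute.one_right _

@[simp]
theorem augmentation_single [Monoid G] (g : G) (r : R) :
    augmentation (single g r) = r := by
  simp [augmentation, liftNCRingHom_single]

variable [Group G]

theorem single_inv_mem_groupRingComponent_one {ℬ : G → AddSubgroup R} {g : G} {r : R}
    (hr : r ∈ ℬ g) : single g⁻¹ r ∈ groupRingComponent ℬ 1 := by
  classical
  intro h
  rw [coeff_single, Finsupp.single_apply]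
  split_ifs with hg
  · simpa [← hg] using hr
  · exact zero_mem _

theorem iSup_le_map_augmentation (ℬ : G → AddSubgroup R) :
    ⨆ g, ℬ g ≤ (groupRingComponent ℬ 1).map (augmentation : MonoidAlgebra R G →+* R) :=
  iSup_le fun g r hr =>
    ⟨single g⁻¹ r, single_inv_mem_groupRingComponent_one hr, augmentation_single _ _⟩

end MonoidAlgebra

/-- If the group ring `R[G]` (with its `G`-grading) is graded NR-clean,
then `R` is an NR-clean ring. -/
theorem stmt18 {G : Type*} [Group G] [DecidableEq G] {R : Type*} [Ring R]
    (𝒜 : G → AddSubgroup R) (hG : IsGrading 𝒜)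
    (h : GradedNRClean (groupRingComponent 𝒜)) : NRClean R := by
  intro x
  have hx : x ∈ ⨆ g, 𝒜 g := by
    rw [hG.isInternal.addSubgroup_iSup_eq_top]
    exact AddSubgroup.mem_top x
  obtain ⟨u, hu, rfl⟩ := MonoidAlgebra.iSup_le_map_augmentation 𝒜 hx
  exact (h.isNRCleanElement ⟨1, hu⟩).map MonoidAlgebra.augmentation
end

section
/- Let A be a G-graded ring and M a G-graded (A,A)-bimodule. Then the trivial extension R = A ⋉ M, with the grading R_g = A_g ⊕ M_g, is graded NR-clean if and only if A is graded NR-clean. -/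
/-- The `g`-th component `A_g ⊕ M_g` of the grading on the trivial extension `A ⋉ M`. -/
def trivExtComponent {G : Type*} [Group G] {A : Type*} [Ring A]
    {M : Type*} [AddCommGroup M] [Module A M] [Module Aᵐᵒᵖ M] [SMulCommClass A Aᵐᵒᵖ M]
    (𝒜 : G → AddSubgroup A) (ℳ : G → AddSubgroup M) (g : G) :
    AddSubgroup (TrivSqZeroExt A M) where
  carrier := {x | x.fst ∈ 𝒜 g ∧ x.snd ∈ ℳ g}
  zero_mem' := ⟨by simpa using zero_mem (𝒜 g), by simpa using zero_mem (ℳ g)⟩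
  add_mem' := fun {a b} ha hb => by
    refine ⟨?_, ?_⟩
    · rw [TrivSqZeroExt.fst_add]; exact add_mem ha.1 hb.1
    · rw [TrivSqZeroExt.snd_add]; exact add_mem ha.2 hb.2
  neg_mem' := fun {a} ha => by
    refine ⟨?_, ?_⟩
    · rw [TrivSqZeroExt.fst_neg]; exact neg_mem ha.1
    · rw [TrivSqZeroExt.snd_neg]; exact neg_mem ha.2

/-!
Graded NR-cleanness descends along the first projection `A ⋉ M → A`, a degree-preserving ring map.
Conversely, for `x = (a, m)` of degree `g`, take `a = r + n` in `A` and replace `r` and `n` by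
their degree-`g` components, which are either themselves or `0`; then `n` has degree `g`, so
`x = (r, 0) + (n, m)` is the required splitting, `(n, m)` being nilpotent because `0 ⋉ M` squares to zero.
-/

open DirectSum TrivSqZeroExt

theorem DirectSum.decompose_coe_eq_self_or_zero {ι M σ : Type*} [DecidableEq ι] [AddCommMonoid M]
    [SetLike σ M] [AddSubmonoidClass σ M] (ℳ : ι → σ) [Decomposition ℳ] {x : M} {i : ι}
    (j : ι) (hx : x ∈ ℳ i) : (decompose ℳ x j : M) = x ∨ (decompose ℳ x j : M) = 0 := by
  obtain rfl | hij := eq_or_ne i j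
  · exact .inl (decompose_of_mem_same ℳ hx)
  · exact .inr (decompose_of_mem_ne ℳ hx hij)

section GradedRing

variable {G : Type*} [Group G] {R : Type*} [Ring R] {𝒜 : G → AddSubgroup R}

theorem GradedRegular.zero (𝒜 : G → AddSubgroup R) : GradedRegular 𝒜 0 :=
  ⟨⟨1, zero_mem _⟩, 0, ⟨1, zero_mem _⟩, by rw [zero_mul, zero_mul]⟩

theorem GradedNRClean.exists_add_of_mem [DecidableEq G] (hint : IsInternal 𝒜)
    (hclean : GradedNRClean 𝒜) {a : R} {g : G} (ha : a ∈ 𝒜 g) :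
    ∃ r n, GradedRegular 𝒜 r ∧ n ∈ 𝒜 g ∧ IsNilpotent n ∧ a = r + n := by
  let _ := hint.chooseDecomposition
  obtain ⟨r, n, hr, ⟨_, hn⟩, hnil, rfl⟩ := hclean a ⟨g, ha⟩
  refine ⟨decompose 𝒜 r g, decompose 𝒜 n g, ?_, SetLike.coe_mem _, ?_, ?_⟩
  · obtain ⟨_, hr'⟩ := hr.1
    rcases decompose_coe_eq_self_or_zero 𝒜 g hr' with e | e <;> rw [e]
    exacts [hr, GradedRegular.zero 𝒜]
  · rcases decompose_coe_eq_self_or_zero 𝒜 g hn with e | e <;> rw [e]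
    exacts [hnil, IsNilpotent.zero]
  · rw [← decompose_of_mem_same 𝒜 ha, decompose_add, DirectSum.add_apply, AddMemClass.coe_add]

end GradedRing

section TrivSqZeroExt

variable {G : Type*} [Group G] {A : Type*} [Ring A]
    {M : Type*} [AddCommGroup M] [Module A M] [Module Aᵐᵒᵖ M] [SMulCommClass A Aᵐᵒᵖ M]
    {𝒜 : G → AddSubgroup A} {ℳ : G → AddSubgroup M}

theorem inl_mem_trivExtComponent {a : A} {g : G} (ha : a ∈ 𝒜 g) :
    inl a ∈ trivExtComponent 𝒜 ℳ g :=
  ⟨ha, zero_mem _⟩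

theorem Homogeneous.fst {x : TrivSqZeroExt A M} (hx : Homogeneous (trivExtComponent 𝒜 ℳ) x) :
    Homogeneous 𝒜 x.fst :=
  let ⟨g, hg⟩ := hx; ⟨g, hg.1⟩

theorem Homogeneous.inl {a : A} (ha : Homogeneous 𝒜 a) :
    Homogeneous (trivExtComponent 𝒜 ℳ) (inl a) :=
  let ⟨g, hg⟩ := ha; ⟨g, inl_mem_trivExtComponent hg⟩

theorem GradedRegular.fst {x : TrivSqZeroExt A M}
    (hx : GradedRegular (trivExtComponent 𝒜 ℳ) x) : GradedRegular 𝒜 x.fst := by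
  obtain ⟨hhom, b, hb, hxbx⟩ := hx
  refine ⟨hhom.fst, b.fst, hb.fst, ?_⟩
  rw [← fst_mul, ← fst_mul, ← hxbx]

theorem GradedRegular.inl {r : A} (hr : GradedRegular 𝒜 r) :
    GradedRegular (trivExtComponent 𝒜 ℳ) (inl r) := by
  obtain ⟨hhom, b, hb, hrbr⟩ := hr
  refine ⟨hhom.inl, TrivSqZeroExt.inl b, hb.inl, ?_⟩
  rw [← inl_mul, ← inl_mul, ← hrbr]

theorem GradedNRClean.of_trivExtComponent (hclean : GradedNRClean (trivExtComponent 𝒜 ℳ)) :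
    GradedNRClean 𝒜 := by
  intro a ha
  obtain ⟨r, n, hr, hn, hnil, hsum⟩ := hclean (TrivSqZeroExt.inl a) ha.inl
  refine ⟨r.fst, n.fst, hr.fst, hn.fst, isNilpotent_iff_isNilpotent_fst.mp hnil, ?_⟩
  rw [← fst_add, ← hsum, fst_inl]

theorem GradedNRClean.trivExtComponent [DecidableEq G] (hint : IsInternal 𝒜)
    (hclean : GradedNRClean 𝒜) : GradedNRClean (trivExtComponent 𝒜 ℳ) := by
  rintro x ⟨g, hxa, hxm⟩
  obtain ⟨r, n, hr, hn, hnil, hsum⟩ := hclean.exists_add_of_mem hint hxa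
  refine ⟨TrivSqZeroExt.inl r, (n, x.snd), hr.inl, ⟨g, hn, hxm⟩,
    isNilpotent_iff_isNilpotent_fst.mpr hnil, ?_⟩
  ext
  · exact hsum
  · exact (zero_add _).symm

end TrivSqZeroExt

theorem stmt19_general {G : Type*} [Group G] [DecidableEq G] {A : Type*} [Ring A]
    {M : Type*} [AddCommGroup M] [Module A M] [Module Aᵐᵒᵖ M] [SMulCommClass A Aᵐᵒᵖ M]
    (𝒜 : G → AddSubgroup A) (hA : IsGrading 𝒜) (ℳ : G → AddSubgroup M) :
    GradedNRClean (trivExtComponent 𝒜 ℳ) ↔ GradedNRClean 𝒜 :=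
  ⟨GradedNRClean.of_trivExtComponent, GradedNRClean.trivExtComponent hA.isInternal⟩

/-- The trivial extension `A ⋉ M` of a `G`-graded ring `A` by a `G`-graded
`(A,A)`-bimodule `M`, graded by `R_g = A_g ⊕ M_g`, is graded NR-clean iff `A` is. -/
theorem stmt19 {G : Type*} [Group G] [DecidableEq G] {A : Type*} [Ring A]
    {M : Type*} [AddCommGroup M] [Module A M] [Module Aᵐᵒᵖ M] [SMulCommClass A Aᵐᵒᵖ M]
    (𝒜 : G → AddSubgroup A) (hA : IsGrading 𝒜) (ℳ : G → AddSubgroup M)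
    (hsmul : ∀ {g h : G} {a : A} {m : M}, a ∈ 𝒜 g → m ∈ ℳ h → a • m ∈ ℳ (g * h))
    (hsmul' : ∀ {g h : G} {a : A} {m : M}, a ∈ 𝒜 h → m ∈ ℳ g →
      (MulOpposite.op a) • m ∈ ℳ (g * h))
    (hdirect : DirectSum.IsInternal ℳ) :
    GradedNRClean (trivExtComponent 𝒜 ℳ) ↔ GradedNRClean 𝒜 :=
  stmt19_general 𝒜 hA ℳ
end
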